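/- Let $m \geq 1$ and $B$ be positive integers, and let $w_1, \ldots, w_{3m}$ be positive integers with $B/4 < w_i < B/2$ for all $i$ and $\sum_i w_i = mB$. Let $t > 7m$ and let $T$ be the star tree with center $x$ of weight $1$ and leaves $x_1,\ldots,x_{3m}$ of weights $w_i + B + 1$, $y_1,\ldots,y_m$ of weight $1$, and $z_1,\ldots,z_t$ of weight $B+1$, all edge weights $1$ and zero potential. Then for $k = m + t$, $\mathrm{MISO}_k(T) = 1/(B+1)$. -/

import Mathlib

open Finset

variable {V : Type*} [Fintype V] [DecidableEq V]

/-- Total flow (sum of edge weights) between two vertex sets. -/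
noncomputable def flowBetween (G : SimpleGraph V) [DecidableRel G.Adj]
    (φ : V → V → ℝ) (A B : Finset V) : ℝ :=
  ∑ x ∈ A, ∑ y ∈ B, if G.Adj x y then φ x y else 0

/-- `φ(∂A)`: the total flow across the boundary of `A`. -/
noncomputable def bdryFlow (G : SimpleGraph V) [DecidableRel G.Adj]
    (φ : V → V → ℝ) (A : Finset V) : ℝ :=
  flowBetween G φ A Aᶜ

/-- The normalized flow `(φ(∂A) + p(A)) / ω(A)` of a set `A`. -/
noncomputable def nflow (G : SimpleGraph V) [DecidableRel G.Adj]
    (ω : V → ℝ) (φ : V → V → ℝ) (p : V → ℝ) (A : Finset V) : ℝ :=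
  (bdryFlow G φ A + ∑ x ∈ A, p x) / ∑ x ∈ A, ω x

/-- A `k`-subpartition: `k` nonempty pairwise disjoint subsets. -/
def IsSubpartition {k : ℕ} (𝒜 : Fin k → Finset V) : Prop :=
  (∀ i, (𝒜 i).Nonempty) ∧ ∀ i j, i ≠ j → Disjoint (𝒜 i) (𝒜 j)

/-- The (max-version) cost of a family of sets. -/
noncomputable def cost (G : SimpleGraph V) [DecidableRel G.Adj]
    (ω : V → ℝ) (φ : V → V → ℝ) (p : V → ℝ) {k : ℕ} (𝒜 : Fin k → Finset V) : ℝ :=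
  ⨆ i, nflow G ω φ p (𝒜 i)

/-- `MISO_k(G)`: minimum cost over `k`-subpartitions. -/
noncomputable def MISO (G : SimpleGraph V) [DecidableRel G.Adj]
    (ω : V → ℝ) (φ : V → V → ℝ) (p : V → ℝ) (k : ℕ) : ℝ :=
  sInf {c | ∃ 𝒜 : Fin k → Finset V, IsSubpartition 𝒜 ∧ c = cost G ω φ p 𝒜}

/-- `MNC_k(G)`: minimum cost over `k`-partitions. -/
noncomputable def MNC (G : SimpleGraph V) [DecidableRel G.Adj]
    (ω : V → ℝ) (φ : V → V → ℝ) (p : V → ℝ) (k : ℕ) : ℝ :=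
  sInf {c | ∃ 𝒜 : Fin k → Finset V, IsSubpartition 𝒜 ∧ (∀ x, ∃ i, x ∈ 𝒜 i) ∧
    c = cost G ω φ p 𝒜}

/-- The star graph on `Option α` with center `none`. -/
def starGraph (α : Type*) : SimpleGraph (Option α) where
  Adj u v := u ≠ v ∧ (u = none ∨ v = none)
  symm := ⟨fun u v ⟨h1, h2⟩ => ⟨h1.symm, h2.symm⟩⟩
  loopless := ⟨fun u ⟨h, _⟩ => h rfl⟩

instance {α : Type*} [DecidableEq α] : DecidableRel (starGraph α).Adj :=
  fun u v => inferInstanceAs (Decidable (u ≠ v ∧ (u = none ∨ v = none)))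

/-- Vertex type of the star tree in the 3-PARTITION reduction:
center `none`, leaves `x_i` (`Sum.inl`), `y_j` (`Sum.inr (Sum.inl _)`) and
`z_l` (`Sum.inr (Sum.inr _)`). -/
abbrev starV (m t : ℕ) := Option (Fin (3 * m) ⊕ (Fin m ⊕ Fin t))

/-- Vertex weights of the star tree of the 3-PARTITION reduction. -/
noncomputable def starW (m t B : ℕ) (w : Fin (3 * m) → ℕ) : starV m t → ℝ
  | none => 1
  | some (Sum.inl i) => (w i : ℝ) + B + 1
  | some (Sum.inr (Sum.inl _)) => 1
  | some (Sum.inr (Sum.inr _)) => (B : ℝ) + 1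

/-!
The `m + t` singletons formed by `m` of the `x`-leaves and all `z`-leaves have normalized
flow `1 / ω ≤ 1 / (B + 1)` each. Conversely, only `4m + 1 < m + t` vertices are not
`z`-leaves, so every `(m + t)`-subpartition has a part made of `z`-leaves only, and such a
part has normalized flow exactly `1 / (B + 1)`: every leaf sends one unit of flow to the
center and weighs `B + 1`.
-/

lemma isSubpartition_singleton_of_injective {β : Type*} {k : ℕ} {f : Fin k → β}
    (hf : Function.Injective f) : IsSubpartition fun i => ({f i} : Finset β) :=
  ⟨fun _ => singleton_nonempty _,
    fun _ _ hij => disjoint_singleton.2 fun h => hij (hf h)⟩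

lemma IsSubpartition.exists_subset_of_card_compl_lt {k : ℕ} {𝒜 : Fin k → Finset V}
    (h𝒜 : IsSubpartition 𝒜) {Z : Finset V} (hZ : #Zᶜ < k) : ∃ i, 𝒜 i ⊆ Z := by
  by_contra! hout
  choose g hg𝒜 hgZ using fun i => not_subset.1 (hout i)
  have hinj : Function.Injective g := fun i j hij => by
    by_contra hne
    exact disjoint_left.1 (h𝒜.2 i j hne) (hg𝒜 i) (hij ▸ hg𝒜 j)
  have hle := card_le_card_of_injOn (s := univ) (t := Zᶜ) g
    (fun i _ => mem_compl.2 (hgZ i)) hinj.injOn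
  rw [card_univ, Fintype.card_fin] at hle
  omega

section MISO

variable (G : SimpleGraph V) [DecidableRel G.Adj] (ω : V → ℝ) (φ : V → V → ℝ) (p : V → ℝ)

lemma nflow_le_cost {k : ℕ} (𝒜 : Fin k → Finset V) (i : Fin k) :
    nflow G ω φ p (𝒜 i) ≤ cost G ω φ p 𝒜 :=
  Finite.le_ciSup (fun j => nflow G ω φ p (𝒜 j)) i

lemma MISO_eq_of_cost_le {k : ℕ} {c : ℝ} {𝒜₀ : Fin k → Finset V} (h𝒜₀ : IsSubpartition 𝒜₀)
    (hcost : cost G ω φ p 𝒜₀ ≤ c)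
    (hlower : ∀ 𝒜 : Fin k → Finset V, IsSubpartition 𝒜 → c ≤ cost G ω φ p 𝒜) :
    MISO G ω φ p k = c := by
  have hbdd : ∀ c' ∈ {c' | ∃ 𝒜 : Fin k → Finset V, IsSubpartition 𝒜 ∧ c' = cost G ω φ p 𝒜},
      c ≤ c' := by
    rintro _ ⟨𝒜, h𝒜, rfl⟩
    exact hlower 𝒜 h𝒜
  exact le_antisymm ((csInf_le ⟨c, hbdd⟩ ⟨𝒜₀, h𝒜₀, rfl⟩).trans hcost)
    (le_csInf ⟨_, 𝒜₀, h𝒜₀, rfl⟩ hbdd)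

end MISO

section StarGraph

lemma starGraph_adj_some_iff {α : Type*} {a : α} {v : Option α} :
    (starGraph α).Adj (some a) v ↔ v = none := by
  cases v <;> simp [starGraph]

variable {α : Type*} [Fintype α] [DecidableEq α]

lemma bdryFlow_starGraph_one {A : Finset (Option α)} (hA : none ∉ A) :
    bdryFlow (starGraph α) (fun _ _ => 1) A = #A := by
  have hleaf : ∀ x ∈ A, (∑ y ∈ Aᶜ, if (starGraph α).Adj x y then (1 : ℝ) else 0) = 1 := by
    rintro (_ | a) hx
    · exact absurd hx hA
    · simp only [starGraph_adj_some_iff, sum_ite_eq', mem_compl, hA, not_false_eq_true,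
        if_true]
  rw [bdryFlow, flowBetween, sum_congr rfl hleaf, sum_const, nsmul_one]

lemma nflow_starGraph_of_forall_eq {ω : Option α → ℝ} {A : Finset (Option α)} {c : ℝ}
    (hA : A.Nonempty) (hnone : none ∉ A) (hω : ∀ v ∈ A, ω v = c) :
    nflow (starGraph α) ω (fun _ _ => 1) (fun _ => 0) A = 1 / c := by
  have hcard : (#A : ℝ) ≠ 0 := by exact_mod_cast hA.card_pos.ne'
  rw [nflow, bdryFlow_starGraph_one hnone, sum_const_zero, add_zero, sum_congr rfl hω,
    sum_const, nsmul_eq_mul, div_mul_cancel_left₀ hcard, one_div]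

lemma nflow_starGraph_singleton (ω : Option α → ℝ) (a : α) :
    nflow (starGraph α) ω (fun _ _ => 1) (fun _ => 0) {some a} = 1 / ω (some a) :=
  nflow_starGraph_of_forall_eq (singleton_nonempty _) (by simp) fun _ hv => by
    rw [mem_singleton.1 hv]

lemma cost_starGraph_singleton_le {ω : Option α → ℝ} {k : ℕ} (hk : 0 < k) (f : Fin k → α)
    {c : ℝ} (hc : 0 < c) (hω : ∀ i, c ≤ ω (some (f i))) :
    cost (starGraph α) ω (fun _ _ => 1) (fun _ => 0) (fun i => {some (f i)}) ≤ 1 / c := by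
  have : Nonempty (Fin k) := ⟨⟨0, hk⟩⟩
  refine ciSup_le fun i => ?_
  rw [nflow_starGraph_singleton]
  exact one_div_le_one_div_of_le hc (hω i)

end StarGraph

section StarTree

variable {m t : ℕ}

def zLeaves (m t : ℕ) : Finset (starV m t) :=
  univ.map ⟨fun l => some (Sum.inr (Sum.inr l)), fun _ _ h => by simpa using h⟩

lemma card_compl_zLeaves : #(zLeaves m t)ᶜ = 3 * m + m + 1 := by
  rw [card_compl, zLeaves, card_map, card_univ]
  simp only [Fintype.card_option, Fintype.card_sum, Fintype.card_fin]
  omega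

lemma none_notMem_zLeaves : none ∉ zLeaves m t := by
  simp [zLeaves]

lemma starW_of_mem_zLeaves {B : ℕ} {w : Fin (3 * m) → ℕ} {v : starV m t}
    (hv : v ∈ zLeaves m t) : starW m t B w v = B + 1 := by
  obtain ⟨l, -, rfl⟩ := mem_map.1 hv
  rfl

lemma one_div_le_cost_starTree {B k : ℕ} {w : Fin (3 * m) → ℕ} (hk : 3 * m + m + 1 < k)
    {𝒜 : Fin k → Finset (starV m t)} (h𝒜 : IsSubpartition 𝒜) :
    1 / ((B : ℝ) + 1) ≤
      cost (starGraph (Fin (3 * m) ⊕ (Fin m ⊕ Fin t))) (starW m t B w)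
        (fun _ _ => 1) (fun _ => 0) 𝒜 := by
  obtain ⟨i, hi⟩ := h𝒜.exists_subset_of_card_compl_lt (card_compl_zLeaves ▸ hk)
  have hflow := nflow_starGraph_of_forall_eq (ω := starW m t B w) (h𝒜.1 i)
    (fun h => none_notMem_zLeaves (hi h)) fun v hv => starW_of_mem_zLeaves (hi hv)
  exact hflow ▸ nflow_le_cost _ _ _ _ 𝒜 i

end StarTree

theorem MISO_starTree_general (m B t : ℕ) (hm : 1 ≤ m) (ht : 7 * m < t)
    (w : Fin (3 * m) → ℕ) :
    MISO (starGraph (Fin (3 * m) ⊕ (Fin m ⊕ Fin t))) (starW m t B w)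
        (fun _ _ => 1) (fun _ => 0) (m + t)
      = 1 / ((B : ℝ) + 1) := by
  -- the `m + t` singletons: `m` of the `x`-leaves and all of the `z`-leaves
  let f : Fin (m + t) → Fin (3 * m) ⊕ (Fin m ⊕ Fin t) :=
    Sum.map (Fin.castLE (by omega)) Sum.inr ∘ finSumFinEquiv.symm
  have hf : Function.Injective f :=
    (Sum.map_injective.2 ⟨Fin.castLE_injective _, Sum.inr_injective⟩).comp
      finSumFinEquiv.symm.injective
  have hweight : ∀ i, (B : ℝ) + 1 ≤ starW m t B w (some (f i)) := fun i => by
    cases h : finSumFinEquiv.symm i <;> simp [f, h, starW]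
  exact MISO_eq_of_cost_le _ _ _ _
    (isSubpartition_singleton_of_injective (Option.some_injective _ |>.comp hf))
    (cost_starGraph_singleton_le (by omega) f (by positivity) hweight)
    fun _ h𝒜 => one_div_le_cost_starTree (by omega) h𝒜

/-- In the 3-PARTITION reduction, the star tree has
`MISO_{m+t}(T) = 1/(B+1)`. -/
theorem MISO_starTree (m B t : ℕ) (hm : 1 ≤ m) (hB : 1 ≤ B) (ht : 7 * m < t)
    (w : Fin (3 * m) → ℕ)
    (hw : ∀ i, B < 4 * w i ∧ 2 * w i < B)
    (hsum : ∑ i, w i = m * B) :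
    MISO (starGraph (Fin (3 * m) ⊕ (Fin m ⊕ Fin t))) (starW m t B w)
        (fun _ _ => 1) (fun _ => 0) (m + t)
      = 1 / ((B : ℝ) + 1) :=
  MISO_starTree_general m B t hm ht w
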